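/- arXiv:2112.13500 — 4 statements merged into one kernel-verified Lean document; each statement's English description precedes it below -/
import Mathlib

section
/- The group O⁺(2,1)(ℤ) is generated by the three reflections Ref_{H−E₁−E₂}, Ref_{E₁−E₂}, and Ref_{E₂}; that is, the subgroup of GL(3,ℤ) generated by these three matrices equals the full group {A ∈ GL(3,ℤ) : Aᵀ J A = J and the (0,0) entry of A is positive}. -/
open Matrix

/-- The symmetric bilinear form `Q(x,y) = x₀y₀ − x₁y₁ − x₂y₂` on `ℤ³`. -/
def Q3 (x y : Fin 3 → ℤ) : ℤ := x 0 * y 0 - x 1 * y 1 - x 2 * y 2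

/-- The Gram matrix `J = diag(1,−1,−1)` of `Q3`. -/
def J3 : Matrix (Fin 3) (Fin 3) ℤ := Matrix.diagonal ![1, -1, -1]

/-- The matrix of the reflection `w ↦ w − (2·Q(v,w)/Q(v,v))·v` about `v`. -/
def reflMat3 (v : Fin 3 → ℤ) : Matrix (Fin 3) (Fin 3) ℤ :=
  Matrix.of fun i j => (if i = j then 1 else 0) - 2 * Q3 v (Pi.single j 1) / Q3 v v * v i

/-- `Ref_{H−E₁−E₂}` as an element of `GL(3,ℤ)`. -/
def refHE1E2 : (Matrix (Fin 3) (Fin 3) ℤ)ˣ :=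
  ⟨reflMat3 ![1, -1, -1], reflMat3 ![1, -1, -1], by decide, by decide⟩

/-- `Ref_{E₁−E₂}` as an element of `GL(3,ℤ)`. -/
def refE1E2 : (Matrix (Fin 3) (Fin 3) ℤ)ˣ :=
  ⟨reflMat3 ![0, 1, -1], reflMat3 ![0, 1, -1], by decide, by decide⟩

/-- `Ref_{E₂}` as an element of `GL(3,ℤ)`. -/
def refE2 : (Matrix (Fin 3) (Fin 3) ℤ)ˣ :=
  ⟨reflMat3 ![0, 0, 1], reflMat3 ![0, 0, 1], by decide, by decide⟩

namespace Oplus21Aux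

abbrev G3 := (Matrix (Fin 3) (Fin 3) ℤ)ˣ

def quad3 (A : G3) : Prop := (A.val)ᵀ * J3 * A.val = J3

lemma J3_sq : J3 * J3 = 1 := by decide
lemma J3_t : J3ᵀ = J3 := by decide

lemma quad3_mul {A B : G3} (hA : quad3 A) (hB : quad3 B) : quad3 (A*B) := by
  unfold quad3 at *
  simp only [Units.val_mul, Matrix.transpose_mul]
  rw [show (B.val)ᵀ*(A.val)ᵀ*J3*((A.val)*(B.val)) = (B.val)ᵀ*((A.val)ᵀ*J3*(A.val))*(B.val) from by
    simp only [Matrix.mul_assoc], hA, hB]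

lemma inv_val_eq {A : G3} (hA : quad3 A) :
    ((A⁻¹ : G3) : Matrix (Fin 3) (Fin 3) ℤ) = J3 * (A.val)ᵀ * J3 := by
  have h : J3 * (A.val)ᵀ * J3 * A.val = 1 := by
    rw [show J3 * (A.val)ᵀ * J3 * A.val = J3 * ((A.val)ᵀ * J3 * A.val) from by
      simp only [Matrix.mul_assoc], hA, J3_sq]
  exact Units.inv_eq_of_mul_eq_one_left h

lemma quad3_row {A : G3} (hA : quad3 A) : A.val * J3 * (A.val)ᵀ = J3 := by
  have h1 : A.val * (J3 * (A.val)ᵀ * J3) = 1 := by rw [← inv_val_eq hA]; exact A.mul_inv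
  calc A.val * J3 * (A.val)ᵀ = A.val * (J3 * (A.val)ᵀ * J3) * J3 := by
        simp only [Matrix.mul_assoc, J3_sq, Matrix.mul_one]
    _ = J3 := by rw [h1, Matrix.one_mul]

lemma quad3_inv {A : G3} (hA : quad3 A) : quad3 A⁻¹ := by
  unfold quad3
  rw [inv_val_eq hA]
  rw [Matrix.transpose_mul, Matrix.transpose_mul, J3_t, Matrix.transpose_transpose]
  calc J3 * (A.val * J3) * J3 * (J3 * (A.val)ᵀ * J3)
      = J3 * ((A.val * J3 * (A.val)ᵀ) * J3) := by
        simp only [Matrix.mul_assoc, J3_sq, Matrix.mul_one, Matrix.one_mul]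
    _ = J3 := by rw [quad3_row hA, J3_sq, Matrix.mul_one]

lemma quad3_entry {A : G3} (hA : quad3 A) (i j : Fin 3) :
    A.val 0 i * A.val 0 j - A.val 1 i * A.val 1 j - A.val 2 i * A.val 2 j = J3 i j := by
  have := congrFun (congrFun hA i) j
  simp [Matrix.mul_apply, Fin.sum_univ_three, J3, Matrix.diagonal, Matrix.transpose_apply]
    at this ⊢
  linarith [this]

lemma quad3_row_entry {A : G3} (hA : quad3 A) :
    A.val 0 0 * A.val 0 0 - A.val 0 1 * A.val 0 1 - A.val 0 2 * A.val 0 2 = 1 := by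
  have := congrFun (congrFun (quad3_row hA) 0) 0
  simp [Matrix.mul_apply, Fin.sum_univ_three, J3, Matrix.diagonal, Matrix.transpose_apply] at this
  linarith [this]

lemma inv_00 {A : G3} (hA : quad3 A) :
    ((A⁻¹ : G3) : Matrix (Fin 3) (Fin 3) ℤ) 0 0 = A.val 0 0 := by
  rw [inv_val_eq hA]
  simp [Matrix.mul_apply, Fin.sum_univ_three, J3, Matrix.diagonal, Matrix.transpose_apply]

lemma mul_00_pos {A B : G3} (hA : quad3 A) (hB : quad3 B)
    (ha : 0 < A.val 0 0) (hb : 0 < B.val 0 0) : 0 < (A*B).val 0 0 := by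
  have h1 := quad3_row_entry hA
  have h2 := quad3_entry hB 0 0
  simp [J3, Matrix.diagonal] at h2
  have h3 : (A*B).val 0 0 = A.val 0 0 * B.val 0 0 + A.val 0 1 * B.val 1 0 + A.val 0 2 * B.val 2 0 := by
    simp [Units.val_mul, Matrix.mul_apply, Fin.sum_univ_three]
  rw [h3]
  nlinarith [sq_nonneg (A.val 0 1 * B.val 2 0 - A.val 0 2 * B.val 1 0),
    sq_nonneg (A.val 0 0 * B.val 0 0 + A.val 0 1 * B.val 1 0 + A.val 0 2 * B.val 2 0),
    mul_pos ha hb, sq_nonneg (A.val 0 0 * B.val 0 0 - 1), sq_nonneg (A.val 0 0 - B.val 0 0)]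

def OplusSG : Subgroup G3 where
  carrier := {A | quad3 A ∧ 0 < A.val 0 0}
  one_mem' := ⟨by unfold quad3; simp [Units.val_one], by simp [Units.val_one, Matrix.one_apply]⟩
  mul_mem' := fun hA hB => ⟨quad3_mul hA.1 hB.1, mul_00_pos hA.1 hB.1 hA.2 hB.2⟩
  inv_mem' := fun hA => ⟨quad3_inv hA.1, by rw [inv_00 hA.1]; exact hA.2⟩

def Cgen : Subgroup G3 := Subgroup.closure {refHE1E2, refE1E2, refE2}

lemma gen_le : Cgen ≤ OplusSG := by
  apply (Subgroup.closure_le _).2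
  intro x hx
  simp only [Set.mem_insert_iff, Set.mem_singleton_iff] at hx
  rcases hx with rfl | rfl | rfl <;>
    exact ⟨by unfold quad3; decide, by decide⟩

lemma step {A w : G3} (hw : w ∈ Cgen) (h : w * A ∈ Cgen) : A ∈ Cgen := by
  have hA : A = w⁻¹ * (w * A) := by group
  rw [hA]; exact mul_mem (inv_mem hw) h

lemma mem_of_val_eq {A w : G3} (h : A.val = w.val) (hw : w ∈ Cgen) : A ∈ Cgen := by
  have : A = w := Units.ext h
  rw [this]; exact hw

lemma unit_bnd {x y : ℤ} (h : x*x + y*y = 1) : -1 ≤ x ∧ x ≤ 1 :=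
  ⟨by nlinarith [sq_nonneg y], by nlinarith [sq_nonneg y]⟩

set_option maxHeartbeats 1000000 in
lemma stab_mem {p q r s : ℤ} (A : G3) (hM : A.val = !![1,0,0;0,p,q;0,r,s])
    (hpr : p*p + r*r = 1) (hqs : q*q + s*s = 1) (horth : p*q + r*s = 0) : A ∈ Cgen := by
  have m2 : refE1E2 ∈ Cgen := Subgroup.subset_closure (by simp)
  have m3 : refE2 ∈ Cgen := Subgroup.subset_closure (by simp)
  obtain ⟨hpb1, hpb2⟩ := unit_bnd hpr
  obtain ⟨hrb1, hrb2⟩ := unit_bnd (by linarith : r*r + p*p = 1)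
  obtain ⟨hqb1, hqb2⟩ := unit_bnd hqs
  obtain ⟨hsb1, hsb2⟩ := unit_bnd (by linarith : s*s + q*q = 1)
  interval_cases p <;> interval_cases q <;> interval_cases r <;> interval_cases s <;>
    first
    | omega
    | exact mem_of_val_eq (w := 1) (by rw [hM]; decide) (one_mem _)
    | exact mem_of_val_eq (w := refE1E2) (by rw [hM]; decide) m2
    | exact mem_of_val_eq (w := refE2) (by rw [hM]; decide) m3
    | exact mem_of_val_eq (w := refE1E2 * refE2) (by rw [hM]; decide) (mul_mem m2 m3)
    | exact mem_of_val_eq (w := refE2 * refE1E2) (by rw [hM]; decide) (mul_mem m3 m2)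
    | exact mem_of_val_eq (w := refE1E2 * refE2 * refE1E2) (by rw [hM]; decide)
        (mul_mem (mul_mem m2 m3) m2)
    | exact mem_of_val_eq (w := refE2 * refE1E2 * refE2) (by rw [hM]; decide)
        (mul_mem (mul_mem m3 m2) m3)
    | exact mem_of_val_eq (w := refE1E2 * refE2 * refE1E2 * refE2) (by rw [hM]; decide)
        (mul_mem (mul_mem (mul_mem m2 m3) m2) m3)

lemma no_hyperbola {a c : ℤ} (h : a*a - c*c = 1) (ha : 2 ≤ a) : False := by
  have h1 : -c < a := by nlinarith [sq_nonneg (a+c), sq_nonneg (a-c)]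
  have h2 : c < a := by nlinarith [sq_nonneg (a+c), sq_nonneg (a-c)]
  nlinarith [mul_nonneg (by linarith : (0:ℤ) ≤ a-1-c) (by linarith : (0:ℤ) ≤ a-1+c)]

lemma desc_ineq {a b c : ℤ} (h : a*a - b*b - c*c = 1) (ha : 2 ≤ a) (hb : 1 ≤ b) (hc : 1 ≤ c) :
    0 < 3*a - 2*b - 2*c ∧ 3*a - 2*b - 2*c < a := by
  constructor
  · nlinarith [sq_nonneg (b - c), mul_pos (by linarith : (0:ℤ) < b) (by linarith : (0:ℤ) < c),
      sq_nonneg (3*a - 2*b - 2*c)]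
  · nlinarith [mul_pos (by linarith : (0:ℤ) < b) (by linarith : (0:ℤ) < c),
      sq_nonneg (a - b - c)]

lemma key : ∀ n : ℕ, ∀ A : G3, quad3 A → 0 < A.val 0 0 → (A.val 0 0).toNat ≤ n → A ∈ Cgen := by
  intro n
  induction n with
  | zero => intro A _ hpos hn; omega
  | succ n IH =>
    intro A hq hpos hn
    have m1 : refHE1E2 ∈ Cgen := Subgroup.subset_closure (by simp)
    have m2 : refE1E2 ∈ Cgen := Subgroup.subset_closure (by simp)
    have m3 : refE2 ∈ Cgen := Subgroup.subset_closure (by simp)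
    have hcol : A.val 0 0 * A.val 0 0 - A.val 1 0 * A.val 1 0 - A.val 2 0 * A.val 2 0 = 1 := by
      have := quad3_entry hq 0 0
      simpa [J3, Matrix.diagonal] using this
    by_cases h1 : A.val 0 0 = 1
    · -- stabilizer case
      have hb0 : A.val 1 0 = 0 := by nlinarith [sq_nonneg (A.val 1 0), sq_nonneg (A.val 2 0)]
      have hc0 : A.val 2 0 = 0 := by nlinarith [sq_nonneg (A.val 1 0), sq_nonneg (A.val 2 0)]
      have h01 : A.val 0 1 = 0 := by
        have := quad3_entry hq 0 1
        simp [J3, Matrix.diagonal] at this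
        rw [h1, hb0, hc0] at this; linarith
      have h02 : A.val 0 2 = 0 := by
        have := quad3_entry hq 0 2
        simp [J3, Matrix.diagonal] at this
        rw [h1, hb0, hc0] at this; linarith
      obtain ⟨p, hp⟩ : ∃ p, A.val 1 1 = p := ⟨_, rfl⟩
      obtain ⟨q, hqq⟩ : ∃ q, A.val 1 2 = q := ⟨_, rfl⟩
      obtain ⟨r, hr⟩ : ∃ r, A.val 2 1 = r := ⟨_, rfl⟩
      obtain ⟨s, hs⟩ : ∃ s, A.val 2 2 = s := ⟨_, rfl⟩
      have hpr : p*p + r*r = 1 := by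
        have := quad3_entry hq 1 1
        simp [J3, Matrix.diagonal] at this
        rw [h01, hp, hr] at this; linarith
      have hqs : q*q + s*s = 1 := by
        have := quad3_entry hq 2 2
        simp [J3, Matrix.diagonal] at this
        rw [h02, hqq, hs] at this; linarith
      have horth : p*q + r*s = 0 := by
        have := quad3_entry hq 1 2
        simp [J3, Matrix.diagonal] at this
        rw [h01, h02, hp, hqq, hr, hs] at this; linarith
      have hM : A.val = !![1,0,0;0,p,q;0,r,s] := by
        ext i j
        fin_cases i <;> fin_cases j <;>
          simp only [Matrix.cons_val', Matrix.cons_val_zero, Matrix.cons_val_one,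
            Matrix.head_cons, Matrix.head_fin_const, Matrix.empty_val',
            Matrix.cons_val_fin_one, Matrix.of_apply] <;>
          first
          | exact h1 | exact h01 | exact h02 | exact hb0 | exact hc0
          | exact hp | exact hqq | exact hr | exact hs
      exact stab_mem A hM hpr hqs horth
    · -- descent case
      have ha2 : 2 ≤ A.val 0 0 := by omega
      have hbne : A.val 1 0 ≠ 0 := by
        intro h
        exact no_hyperbola (a := A.val 0 0) (c := A.val 2 0)
          (by linear_combination hcol + A.val 1 0 * h) ha2
      have hcne : A.val 2 0 ≠ 0 := by
        intro h
        exact no_hyperbola (a := A.val 0 0) (c := A.val 1 0)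
          (by linear_combination hcol + A.val 2 0 * h) ha2
      rcases lt_or_gt_of_ne hbne with hb | hb <;> rcases lt_or_gt_of_ne hcne with hc | hc
      · -- b < 0, c < 0 : w = refHE1E2, row0 = (3,2,2)
        have hv : (refHE1E2).val = !![3,2,2;-2,-1,-2;-2,-2,-1] := by decide
        have hwmem : refHE1E2 ∈ Cgen := m1
        have h00 : (refHE1E2*A).val 0 0 = 3*A.val 0 0 + 2*A.val 1 0 + 2*A.val 2 0 := by
          rw [Units.val_mul, hv]
          simp [Matrix.mul_apply, Fin.sum_univ_three]; try ring
        obtain ⟨hpos', hlt⟩ := desc_ineq (a := A.val 0 0) (b := -A.val 1 0) (c := -A.val 2 0)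
          (by linear_combination hcol) ha2 (by omega) (by omega)
        refine step hwmem (IH _ (quad3_mul (gen_le hwmem).1 hq) (by rw [h00]; linarith)
          (by rw [h00]; omega))
      · -- b < 0, c > 0 : w = refHE1E2 * refE2, row0 = (3,2,-2)
        have hv : (refHE1E2 * refE2).val = !![3,2,-2;-2,-1,2;-2,-2,1] := by decide
        have hwmem : refHE1E2 * refE2 ∈ Cgen := mul_mem m1 m3
        have h00 : ((refHE1E2 * refE2)*A).val 0 0
            = 3*A.val 0 0 + 2*A.val 1 0 - 2*A.val 2 0 := by
          rw [Units.val_mul, hv]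
          simp [Matrix.mul_apply, Fin.sum_univ_three]; try ring
        obtain ⟨hpos', hlt⟩ := desc_ineq (a := A.val 0 0) (b := -A.val 1 0) (c := A.val 2 0)
          (by linear_combination hcol) ha2 (by omega) (by omega)
        refine step hwmem (IH _ (quad3_mul (gen_le hwmem).1 hq) (by rw [h00]; linarith)
          (by rw [h00]; omega))
      · -- b > 0, c < 0 : w = refHE1E2 * (refE1E2*refE2*refE1E2), row0 = (3,-2,2)
        have hv : (refHE1E2 * (refE1E2*refE2*refE1E2)).val = !![3,-2,2;-2,1,-2;-2,2,-1] := by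
          decide
        have hwmem : refHE1E2 * (refE1E2*refE2*refE1E2) ∈ Cgen :=
          mul_mem m1 (mul_mem (mul_mem m2 m3) m2)
        have h00 : ((refHE1E2 * (refE1E2*refE2*refE1E2))*A).val 0 0
            = 3*A.val 0 0 - 2*A.val 1 0 + 2*A.val 2 0 := by
          rw [Units.val_mul, hv]
          simp [Matrix.mul_apply, Fin.sum_univ_three]; try ring
        obtain ⟨hpos', hlt⟩ := desc_ineq (a := A.val 0 0) (b := A.val 1 0) (c := -A.val 2 0)
          (by linear_combination hcol) ha2 (by omega) (by omega)
        refine step hwmem (IH _ (quad3_mul (gen_le hwmem).1 hq) (by rw [h00]; linarith)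
          (by rw [h00]; omega))
      · -- b > 0, c > 0 : w = refHE1E2 * (refE1E2*refE2*refE1E2) * refE2, row0 = (3,-2,-2)
        have hv : (refHE1E2 * (refE1E2*refE2*refE1E2) * refE2).val
            = !![3,-2,-2;-2,1,2;-2,2,1] := by decide
        have hwmem : refHE1E2 * (refE1E2*refE2*refE1E2) * refE2 ∈ Cgen :=
          mul_mem (mul_mem m1 (mul_mem (mul_mem m2 m3) m2)) m3
        have h00 : ((refHE1E2 * (refE1E2*refE2*refE1E2) * refE2)*A).val 0 0
            = 3*A.val 0 0 - 2*A.val 1 0 - 2*A.val 2 0 := by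
          rw [Units.val_mul, hv]
          simp [Matrix.mul_apply, Fin.sum_univ_three]; try ring
        obtain ⟨hpos', hlt⟩ := desc_ineq (a := A.val 0 0) (b := A.val 1 0) (c := A.val 2 0)
          (by linear_combination hcol) ha2 (by omega) (by omega)
        refine step hwmem (IH _ (quad3_mul (gen_le hwmem).1 hq) (by rw [h00]; linarith)
          (by rw [h00]; omega))

end Oplus21Aux

/-- The subgroup of `GL(3,ℤ)` generated by the three reflections
`Ref_{H−E₁−E₂}`, `Ref_{E₁−E₂}`, `Ref_{E₂}` is exactly
`O⁺(2,1)(ℤ) = {A ∈ GL(3,ℤ) : Aᵀ J A = J, A₀₀ > 0}`. -/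
theorem Oplus21_generated_by_reflections (A : (Matrix (Fin 3) (Fin 3) ℤ)ˣ) :
    A ∈ Subgroup.closure {refHE1E2, refE1E2, refE2} ↔
      ((A : Matrix (Fin 3) (Fin 3) ℤ)ᵀ * J3 * (A : Matrix (Fin 3) (Fin 3) ℤ) = J3 ∧
        0 < (A : Matrix (Fin 3) (Fin 3) ℤ) 0 0) := by
  constructor
  · intro h
    have := Oplus21Aux.gen_le h
    exact ⟨this.1, this.2⟩
  · rintro ⟨hq, hpos⟩
    exact Oplus21Aux.key ((A : Matrix (Fin 3) (Fin 3) ℤ) 0 0).toNat A hq hpos le_rfl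
end

section
/- Every maximal finite subgroup of O⁺(2,1)(ℤ) is conjugate in O⁺(2,1)(ℤ) to one of the two subgroups G_{H−E₁−E₂} := ⟨Ref_{E₁−E₂}, Ref_{E₂}⟩ or G_{E₂} := ⟨Ref_{H−E₁−E₂}, Ref_{E₁−E₂}⟩. -/
open Matrix

/-- The set `O⁺(2,1)(ℤ)` of elements of `GL(3,ℤ)` preserving `J` and with positive
`(0,0)` entry. -/
def Oplus21 : Set (Matrix (Fin 3) (Fin 3) ℤ)ˣ :=
  {A | (A : Matrix (Fin 3) (Fin 3) ℤ)ᵀ * J3 * (A : Matrix (Fin 3) (Fin 3) ℤ) = J3 ∧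
    0 < (A : Matrix (Fin 3) (Fin 3) ℤ) 0 0}

/-!
A finite subgroup of `O⁺(2,1)(ℤ)` fixes the future timelike vector `∑ g H`. Reflecting in the
simple roots `E₂`, `E₁ - E₂`, `H - E₁ - E₂` moves every future timelike vector into the chamber
`Q(α, ·) ≥ 0`, each step lowering the positive integer `Q(·, ρ)` for an interior point `ρ`; so a
conjugate of the group fixes a chamber point `w`. Since `H` and `W = 2H - E₁ - E₂` are the only
chamber vectors of norm `1` and `2`, the same descent shows that an isometry fixing `w` moves
`p ∈ {H, W}` only by an element generated by the simple reflections fixing `w`. No future timelike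
`w` lies on the walls of both `E₂` and `H - E₁ - E₂`, so its stabilizer fixes `H` or `W`. Finally
the stabilizers of `H` and `W` are the two groups of the statement, because an isometry fixing
both `H` and `W` is `1` or `Ref_{E₁-E₂}`.
-/

local notation "ℤ³" => Fin 3 → ℤ
local notation "M₃" => Matrix (Fin 3) (Fin 3) ℤ

lemma Q3_comm (x y : ℤ³) : Q3 x y = Q3 y x := by
  simp only [Q3]; ring

lemma Q3_eq_dotProduct (x y : ℤ³) : Q3 x y = x ⬝ᵥ (J3 *ᵥ y) := by
  simp only [Q3, dotProduct, J3, mulVec_diagonal, Fin.sum_univ_three, cons_val_zero, cons_val_one,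
    cons_val]
  ring

lemma Q3_mulVec {A : M₃} (hA : Aᵀ * J3 * A = J3) (x y : ℤ³) :
    Q3 (A *ᵥ x) (A *ᵥ y) = Q3 x y := by
  rw [Q3_eq_dotProduct, Q3_eq_dotProduct, dotProduct_comm, dotProduct_mulVec, ← mulVec_transpose,
    dotProduct_comm, mulVec_mulVec, mulVec_mulVec, hA]

def IsFuture (x : ℤ³) : Prop := 0 < Q3 x x ∧ 0 < x 0

lemma Q3_pos_of_isFuture {x y : ℤ³} (hx : IsFuture x) (hy : IsFuture y) : 0 < Q3 x y := by
  obtain ⟨hxx, hx0⟩ := hx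
  obtain ⟨hyy, hy0⟩ := hy
  simp only [Q3] at *
  rcases le_or_gt (x 1 * y 1 + x 2 * y 2) 0 with h | h
  · nlinarith [mul_pos hx0 hy0]
  · have hcs : (x 1 * y 1 + x 2 * y 2) ^ 2 < (x 0 * y 0) ^ 2 := by
      nlinarith [sq_nonneg (x 1 * y 2 - x 2 * y 1), mul_pos hxx hyy, sq_nonneg (x 1),
        sq_nonneg (x 2), sq_nonneg (y 1), sq_nonneg (y 2)]
    nlinarith [pow_lt_pow_iff_left₀ h.le (mul_pos hx0 hy0).le two_ne_zero |>.mp hcs]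

namespace IsFuture

lemma add {x y : ℤ³} (hx : IsFuture x) (hy : IsFuture y) : IsFuture (x + y) := by
  have hxy := Q3_pos_of_isFuture hx hy
  refine ⟨?_, by simpa using add_pos hx.2 hy.2⟩
  have : Q3 (x + y) (x + y) = Q3 x x + 2 * Q3 x y + Q3 y y := by
    simp only [Q3, Pi.add_apply]; ring
  linarith [hx.1, hy.1]

lemma of_Q3_pos {x y : ℤ³} (hxx : 0 < Q3 x x) (hy : IsFuture y) (hxy : 0 < Q3 x y) :
    IsFuture x := by
  refine ⟨hxx, lt_of_not_ge fun hx0 => ?_⟩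
  have hx0' : x 0 ≠ 0 := by
    rintro h
    simp only [Q3, h] at hxx
    nlinarith [sq_nonneg (x 1), sq_nonneg (x 2)]
  have hneg : IsFuture (-x) := ⟨by simpa [Q3] using hxx, by simp; omega⟩
  have := Q3_pos_of_isFuture hneg hy
  simp only [Q3, Pi.neg_apply] at this hxy
  linarith

end IsFuture

def vecH : ℤ³ := ![1, 0, 0]

lemma Q3_vecH_left (y : ℤ³) : Q3 vecH y = y 0 := by simp [Q3, vecH]

lemma isFuture_vecH : IsFuture vecH := ⟨by decide, by decide⟩

lemma mulVec_vecH_zero (A : M₃) : (A *ᵥ vecH) 0 = A 0 0 := by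
  simp [vecH, mulVec, dotProduct, Fin.sum_univ_three]

lemma IsFuture.mulVec {A : M₃ˣ} (hA : A ∈ Oplus21) {x : ℤ³} (hx : IsFuture x) :
    IsFuture ((A : M₃) *ᵥ x) := by
  have hAH : IsFuture ((A : M₃) *ᵥ vecH) :=
    ⟨by rw [Q3_mulVec hA.1]; exact isFuture_vecH.1, by rw [mulVec_vecH_zero]; exact hA.2⟩
  refine .of_Q3_pos (by rw [Q3_mulVec hA.1]; exact hx.1) hAH ?_
  rw [Q3_mulVec hA.1, Q3_comm, Q3_vecH_left]
  exact hx.2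

lemma transpose_mul_J3_mul_of_mul_eq_one {A B : M₃} (hA : Aᵀ * J3 * A = J3) (hAB : A * B = 1) :
    Bᵀ * J3 * B = J3 := by
  calc Bᵀ * J3 * B = Bᵀ * (Aᵀ * J3 * A) * B := by rw [hA]
    _ = (A * B)ᵀ * J3 * (A * B) := by simp only [transpose_mul, Matrix.mul_assoc]
    _ = J3 := by rw [hAB]; simp

def oplus21 : Subgroup M₃ˣ where
  carrier := Oplus21
  one_mem' := ⟨by simp, by simp⟩
  mul_mem' {A B} hA hB := by
    refine ⟨?_, ?_⟩
    · calc ((A * B : M₃ˣ) : M₃)ᵀ * J3 * (A * B : M₃ˣ) = (B : M₃)ᵀ * ((A : M₃)ᵀ * J3 * A) * B := by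
            simp only [Units.val_mul, transpose_mul, Matrix.mul_assoc]
        _ = J3 := by rw [hA.1, hB.1]
    · have := ((isFuture_vecH.mulVec hB).mulVec hA).2
      rwa [mulVec_mulVec, ← Units.val_mul, mulVec_vecH_zero] at this
  inv_mem' {A} hA := by
    have hJ : ((A⁻¹ : M₃ˣ) : M₃)ᵀ * J3 * (A⁻¹ : M₃ˣ) = J3 :=
      transpose_mul_J3_mul_of_mul_eq_one hA.1 (by simp)
    refine ⟨hJ, ?_⟩
    have hpos : 0 < Q3 (((A⁻¹ : M₃ˣ) : M₃) *ᵥ vecH) vecH := by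
      rw [← Q3_mulVec hA.1, mulVec_mulVec, ← Units.val_mul, mul_inv_cancel, Units.val_one,
        one_mulVec, Q3_vecH_left, mulVec_vecH_zero]
      exact hA.2
    have hfut := IsFuture.of_Q3_pos (by rw [Q3_mulVec hJ]; exact isFuture_vecH.1) isFuture_vecH hpos
    simpa only [mulVec_vecH_zero] using hfut.2

lemma Q3_add_smul_left (x v y : ℤ³) (a : ℤ) : Q3 (x + a • v) y = Q3 x y + a * Q3 v y := by
  simp only [Q3, Pi.add_apply, Pi.smul_apply, smul_eq_mul]; ring

lemma reflMat3_mulVec {v : ℤ³} {c : ℤ} (hc : Q3 v v * c = 2) (x : ℤ³) :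
    reflMat3 v *ᵥ x = x - (c * Q3 v x) • v := by
  have hv : Q3 v v ≠ 0 := by rintro h; simp [h] at hc
  have hdiv : ∀ a : ℤ, 2 * a / Q3 v v = c * a := fun a => by
    rw [← hc, mul_assoc, Int.mul_ediv_cancel_left _ hv]
  ext i
  simp only [reflMat3, mulVec, dotProduct, Fin.sum_univ_three, of_apply, hdiv, Pi.sub_apply,
    Pi.smul_apply, smul_eq_mul]
  fin_cases i <;> simp [Q3] <;> ring

def simpleRoot : Fin 3 → ℤ³ := ![![0, 0, 1], ![0, 1, -1], ![1, -1, -1]]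

def simpleRefl : Fin 3 → M₃ˣ := ![refE2, refE1E2, refHE1E2]

-- `reflCoeff i = -2 / Q3 (simpleRoot i) (simpleRoot i)`
def reflCoeff : Fin 3 → ℤ := ![2, 1, 2]

lemma simpleRefl_mulVec (i : Fin 3) (x : ℤ³) :
    (simpleRefl i : M₃) *ᵥ x = x + (reflCoeff i * Q3 (simpleRoot i) x) • simpleRoot i := by
  have hc : Q3 (simpleRoot i) (simpleRoot i) * -reflCoeff i = 2 := by fin_cases i <;> decide
  have hrefl : (simpleRefl i : M₃) = reflMat3 (simpleRoot i) := by fin_cases i <;> rfl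
  rw [hrefl, reflMat3_mulVec hc, neg_mul, neg_smul, sub_neg_eq_add]

lemma Q3_simpleRefl_mulVec (i : Fin 3) (x y : ℤ³) :
    Q3 ((simpleRefl i : M₃) *ᵥ x) y
      = Q3 x y + reflCoeff i * Q3 (simpleRoot i) x * Q3 (simpleRoot i) y := by
  rw [simpleRefl_mulVec, Q3_add_smul_left]

lemma reflCoeff_pos (i : Fin 3) : 0 < reflCoeff i := by fin_cases i <;> decide

lemma simpleRefl_mulVec_eq_self_iff (i : Fin 3) (y : ℤ³) :
    (simpleRefl i : M₃) *ᵥ y = y ↔ Q3 (simpleRoot i) y = 0 := by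
  have hα : simpleRoot i ≠ 0 := by fin_cases i <;> decide
  rw [simpleRefl_mulVec, add_eq_left, smul_eq_zero, or_iff_left hα, mul_eq_zero,
    or_iff_right (reflCoeff_pos i).ne']

lemma simpleRefl_inv (i : Fin 3) : (simpleRefl i)⁻¹ = simpleRefl i := by
  fin_cases i <;> rfl

lemma simpleRefl_mul_self (i : Fin 3) : simpleRefl i * simpleRefl i = 1 := by
  nth_rw 2 [← simpleRefl_inv]
  exact mul_inv_cancel _

lemma simpleRefl_mem_oplus21 (i : Fin 3) : simpleRefl i ∈ oplus21 := by
  fin_cases i <;> exact ⟨by decide, by decide⟩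

lemma Q3_simpleRoot_zero (w : ℤ³) : Q3 (simpleRoot 0) w = -w 2 := by simp [simpleRoot, Q3]

lemma Q3_simpleRoot_one (w : ℤ³) : Q3 (simpleRoot 1) w = w 2 - w 1 := by
  simp [simpleRoot, Q3]; ring

lemma Q3_simpleRoot_two (w : ℤ³) : Q3 (simpleRoot 2) w = w 0 + w 1 + w 2 := by
  simp [simpleRoot, Q3]

def chamber : Set ℤ³ := {w | ∀ i, 0 ≤ Q3 (simpleRoot i) w}

lemma mem_chamber_iff {w : ℤ³} : w ∈ chamber ↔ w 2 ≤ 0 ∧ w 1 ≤ w 2 ∧ 0 ≤ w 0 + w 1 + w 2 := by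
  simp only [chamber, Set.mem_ofPred_eq, Fin.forall_fin_succ, Fin.succ_zero_eq_one,
    Fin.succ_one_eq_two, IsEmpty.forall_iff, and_true, Q3_simpleRoot_zero, Q3_simpleRoot_one,
    Q3_simpleRoot_two]
  omega

theorem IsFuture.chamber_induction {P : ℤ³ → Prop}
    (base : ∀ q, IsFuture q → q ∈ chamber → P q)
    (step : ∀ i q, IsFuture q → Q3 (simpleRoot i) q < 0 → P ((simpleRefl i : M₃) *ᵥ q) → P q)
    {q : ℤ³} (hq : IsFuture q) : P q := by
  -- `ρ` is at `Q3`-distance one from every wall, so each reflection towards the chamber lowers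
  -- the positive integer `Q3 q ρ`
  let ρ : ℤ³ := ![4, -2, -1]
  have hρ : IsFuture ρ := ⟨by decide, by decide⟩
  have hαρ : ∀ i, Q3 (simpleRoot i) ρ = 1 := by decide
  induction hn : (Q3 q ρ).toNat using Nat.strong_induction_on generalizing q with
  | _ n ih =>
    by_cases hC : q ∈ chamber
    · exact base q hq hC
    obtain ⟨i, hi⟩ : ∃ i, Q3 (simpleRoot i) q < 0 := by simpa [chamber] using hC
    have hq' := hq.mulVec (simpleRefl_mem_oplus21 i)
    refine step i q hq hi (ih _ ?_ hq' rfl)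
    have hpos := Q3_pos_of_isFuture hq' hρ
    have hdrop := mul_neg_of_pos_of_neg (reflCoeff_pos i) hi
    rw [Q3_simpleRefl_mulVec, hαρ, mul_one] at hpos ⊢
    omega

theorem IsFuture.exists_mulVec_mem_chamber {q : ℤ³} (hq : IsFuture q) :
    ∃ u ∈ oplus21, (u : M₃) *ᵥ q ∈ chamber :=
  hq.chamber_induction (P := fun q => ∃ u ∈ oplus21, (u : M₃) *ᵥ q ∈ chamber)
    (fun q _ hC => ⟨1, one_mem _, by simpa using hC⟩)
    fun i q _ _ ⟨u, hu, huq⟩ => ⟨u * simpleRefl i, mul_mem hu (simpleRefl_mem_oplus21 i),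
      by rwa [Units.val_mul, ← mulVec_mulVec]⟩

lemma two_mul_le_Q3_self_of_mem_chamber {q : ℤ³} (hq : q ∈ chamber) :
    2 * (q 1 * q 2) ≤ Q3 q q := by
  obtain ⟨h2, h12, hs⟩ := mem_chamber_iff.1 hq
  simp only [Q3]
  nlinarith

lemma eq_vecH_of_mem_chamber {q : ℤ³} (hq : q ∈ chamber) (hqq : Q3 q q = 1) : q = vecH := by
  obtain ⟨h2, h12, hs⟩ := mem_chamber_iff.1 hq
  have hle := two_mul_le_Q3_self_of_mem_chamber hq
  have hnn := mul_nonneg_of_nonpos_of_nonpos (h12.trans h2) h2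
  have hq2 : q 2 = 0 := by nlinarith
  have hfac : (q 0 - q 1) * (q 0 + q 1) = 1 := by simp only [Q3, hq2] at hqq; linarith
  rcases Int.mul_eq_one_iff_eq_one_or_neg_one.1 hfac with ⟨ha, hb⟩ | ⟨ha, hb⟩
  · ext i; fin_cases i <;> simp [vecH] <;> omega
  · omega

-- `vecH` and `vecW` span the two rays of the chamber not on the light cone
def vecW : ℤ³ := ![2, -1, -1]

lemma eq_vecW_of_mem_chamber {q : ℤ³} (hq : q ∈ chamber) (hqq : Q3 q q = 2) : q = vecW := by
  obtain ⟨h2, h12, hs⟩ := mem_chamber_iff.1 hq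
  have hle := two_mul_le_Q3_self_of_mem_chamber hq
  have hnn := mul_nonneg_of_nonpos_of_nonpos (h12.trans h2) h2
  have hq2 : q 2 ≠ 0 := by
    intro hq2
    have hfac : (q 0 - q 1) * (q 0 + q 1) = 2 := by simp only [Q3, hq2] at hqq; linarith
    have hpos : 0 < q 0 + q 1 := by nlinarith
    have hdvd : q 0 + q 1 ≤ 2 := Int.le_of_dvd two_pos (Dvd.intro_left _ hfac)
    interval_cases h : q 0 + q 1 <;> omega
  have hq12 : q 1 = -1 ∧ q 2 = -1 := by
    have : q 1 * q 2 = 1 := by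
      have : q 2 ≤ -1 := by omega
      nlinarith
    rcases Int.mul_eq_one_iff_eq_one_or_neg_one.1 this with ⟨ha, hb⟩ | ⟨ha, hb⟩ <;> omega
  have hq0 : q 0 = 2 := by simp only [Q3, hq12.1, hq12.2] at hqq; nlinarith
  ext i; fin_cases i <;> simp [vecW, hq0, hq12]

def vecStabilizer (w : ℤ³) : Subgroup M₃ˣ where
  carrier := {A | (A : M₃) *ᵥ w = w}
  one_mem' := by simp
  mul_mem' {A B} hA hB := by
    change ((A * B : M₃ˣ) : M₃) *ᵥ w = w
    rw [Units.val_mul, ← mulVec_mulVec, hB, hA]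
  inv_mem' {A} hA := by
    change ((A⁻¹ : M₃ˣ) : M₃) *ᵥ w = w
    conv_lhs => rw [← hA]
    rw [mulVec_mulVec, ← Units.val_mul, inv_mul_cancel, Units.val_one, one_mulVec]

lemma mem_vecStabilizer {A : M₃ˣ} {w : ℤ³} : A ∈ vecStabilizer w ↔ (A : M₃) *ᵥ w = w := Iff.rfl

lemma mul_mul_inv_mem_vecStabilizer {A : M₃ˣ} {w : ℤ³} (hA : A ∈ vecStabilizer w) (u : M₃ˣ) :
    u * A * u⁻¹ ∈ vecStabilizer ((u : M₃) *ᵥ w) := by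
  have hu : ((u⁻¹ : M₃ˣ) : M₃) *ᵥ ((u : M₃) *ᵥ w) = w := by
    rw [mulVec_mulVec, Units.inv_mul, one_mulVec]
  rw [mem_vecStabilizer, Units.val_mul, Units.val_mul, ← mulVec_mulVec, ← mulVec_mulVec, hu, hA]

def parabolic (w : ℤ³) : Subgroup M₃ˣ :=
  Subgroup.closure {g | ∃ i, Q3 (simpleRoot i) w = 0 ∧ simpleRefl i = g}

lemma parabolic_le {w : ℤ³} {K : Subgroup M₃ˣ}
    (h : ∀ i, Q3 (simpleRoot i) w = 0 → simpleRefl i ∈ K) : parabolic w ≤ K :=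
  (Subgroup.closure_le K).2 fun _ ⟨i, hi, hg⟩ => hg ▸ h i hi

lemma parabolic_le_oplus21 (w : ℤ³) : parabolic w ≤ oplus21 :=
  parabolic_le fun i _ => simpleRefl_mem_oplus21 i

lemma parabolic_le_vecStabilizer {w p : ℤ³}
    (h : ∀ i, Q3 (simpleRoot i) w = 0 → Q3 (simpleRoot i) p = 0) :
    parabolic w ≤ vecStabilizer p :=
  parabolic_le fun i hi => (simpleRefl_mulVec_eq_self_iff i p).2 (h i hi)

theorem exists_mem_parabolic_mulVec_eq {w p : ℤ³} (hw : w ∈ chamber)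
    (hp : ∀ q ∈ chamber, Q3 q q = Q3 p p → q = p) {q : ℤ³} (hq : IsFuture q)
    (hqq : Q3 q q = Q3 p p) (hqw : Q3 q w ≤ Q3 p w) :
    ∃ u ∈ parabolic w, (u : M₃) *ᵥ p = q := by
  revert hqq hqw
  refine hq.chamber_induction
    (P := fun q => Q3 q q = Q3 p p → Q3 q w ≤ Q3 p w → ∃ u ∈ parabolic w, (u : M₃) *ᵥ p = q)
    (fun q _ hC hqq _ => ⟨1, one_mem _, by simp [hp q hC hqq]⟩) ?_
  intro i q _ hi ih hqq hqw
  have hr := Q3_simpleRefl_mulVec i q w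
  obtain ⟨u, hu, hup⟩ := ih (by rw [Q3_mulVec (simpleRefl_mem_oplus21 i).1, hqq])
    (by nlinarith [mul_neg_of_pos_of_neg (reflCoeff_pos i) hi, hw i])
  have hupw : Q3 ((u : M₃) *ᵥ p) w = Q3 p w := by
    conv_lhs => rw [← parabolic_le_vecStabilizer (fun _ h => h) hu]
    exact Q3_mulVec (parabolic_le_oplus21 w hu).1 p w
  -- the reflection cannot lower `Q3 · w`, so `w` lies on its wall
  have hwall : Q3 (simpleRoot i) w = 0 := by
    have hneg := mul_neg_of_pos_of_neg (reflCoeff_pos i) hi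
    rw [hup] at hupw
    nlinarith [hw i]
  refine ⟨simpleRefl i * u, mul_mem (Subgroup.subset_closure ⟨i, hwall, rfl⟩) hu, ?_⟩
  rw [Units.val_mul, ← mulVec_mulVec, hup, mulVec_mulVec, ← Units.val_mul, simpleRefl_mul_self,
    Units.val_one, one_mulVec]

theorem exists_mem_parabolic_mulVec_eq_mulVec {w p : ℤ³} (hw : w ∈ chamber)
    (hp : ∀ q ∈ chamber, Q3 q q = Q3 p p → q = p) (hpf : IsFuture p) {A : M₃ˣ}
    (hA : A ∈ oplus21 ⊓ vecStabilizer w) : ∃ u ∈ parabolic w, (u : M₃) *ᵥ p = (A : M₃) *ᵥ p := by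
  refine exists_mem_parabolic_mulVec_eq hw hp (hpf.mulVec hA.1) (Q3_mulVec hA.1.1 p p) ?_
  conv_lhs => rw [← mem_vecStabilizer.1 hA.2]
  exact (Q3_mulVec hA.1.1 p w).le

theorem oplus21_inf_vecStabilizer_le_vecStabilizer {w p : ℤ³} (hw : w ∈ chamber)
    (hp : ∀ q ∈ chamber, Q3 q q = Q3 p p → q = p) (hpf : IsFuture p)
    (hwalls : ∀ i, Q3 (simpleRoot i) w = 0 → Q3 (simpleRoot i) p = 0) :
    oplus21 ⊓ vecStabilizer w ≤ vecStabilizer p := fun A hA => by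
  obtain ⟨u, hu, hup⟩ := exists_mem_parabolic_mulVec_eq_mulVec hw hp hpf hA
  rw [mem_vecStabilizer, ← hup]
  exact parabolic_le_vecStabilizer hwalls hu

theorem oplus21_inf_vecStabilizer_le {w p : ℤ³} {K : Subgroup M₃ˣ} (hw : w ∈ chamber)
    (hp : ∀ q ∈ chamber, Q3 q q = Q3 p p → q = p) (hpf : IsFuture p) (hK : parabolic w ≤ K)
    (hwp : oplus21 ⊓ vecStabilizer w ⊓ vecStabilizer p ≤ K) :
    oplus21 ⊓ vecStabilizer w ≤ K := fun A hA => by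
  obtain ⟨u, hu, hup⟩ := exists_mem_parabolic_mulVec_eq_mulVec hw hp hpf hA
  have huw : u ∈ oplus21 ⊓ vecStabilizer w :=
    ⟨parabolic_le_oplus21 w hu, parabolic_le_vecStabilizer (fun _ h => h) hu⟩
  have hB : u⁻¹ * A ∈ oplus21 ⊓ vecStabilizer w ⊓ vecStabilizer p := by
    refine Subgroup.mem_inf.2 ⟨mul_mem (inv_mem huw) hA, mem_vecStabilizer.2 ?_⟩
    rw [Units.val_mul, ← mulVec_mulVec, ← hup, mulVec_mulVec, Units.inv_mul, one_mulVec]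
  simpa using mul_mem (hK hu) (hwp hB)

lemma refE1E2_val : (refE1E2 : M₃) = !![1, 0, 0; 0, 0, 1; 0, 1, 0] := by decide

lemma isFuture_vecW : IsFuture vecW := ⟨by decide, by decide⟩

lemma eq_of_mulVec_eq {A B : M₃} (h₀ : A *ᵥ vecH = B *ᵥ vecH)
    (h₁ : A *ᵥ ![0, 1, 1] = B *ᵥ ![0, 1, 1]) (h₂ : A *ᵥ ![0, 1, -1] = B *ᵥ ![0, 1, -1]) :
    A = B := by
  ext i j
  have e₀ := congrFun h₀ i
  have e₁ := congrFun h₁ i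
  have e₂ := congrFun h₂ i
  simp only [mulVec, dotProduct, vecH, Fin.sum_univ_three, cons_val_zero, cons_val_one, cons_val]
    at e₀ e₁ e₂
  fin_cases j <;> dsimp <;> omega

lemma oplus21_inf_vecStabilizer_vecH_inf_vecW_le {K : Subgroup M₃ˣ} (hK : refE1E2 ∈ K) :
    oplus21 ⊓ vecStabilizer vecH ⊓ vecStabilizer vecW ≤ K := by
  rintro A ⟨⟨hA, hH : (A : M₃) *ᵥ vecH = vecH⟩, hW : (A : M₃) *ᵥ vecW = vecW⟩
  have he : (A : M₃) *ᵥ ![0, 1, 1] = ![0, 1, 1] := by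
    have he : (![0, 1, 1] : ℤ³) = (2 : ℤ) • vecH - vecW := by decide
    rw [he, mulVec_sub, mulVec_smul, hH, hW]
  -- `![0, 1, -1]` and its negative are the only vectors of norm `-2` orthogonal to `vecH` and
  -- `![0, 1, 1]`, both of which `A` fixes
  set x := (A : M₃) *ᵥ ![0, 1, -1] with hx
  have hxH := Q3_mulVec hA.1 ![0, 1, -1] vecH
  have hxe := Q3_mulVec hA.1 ![0, 1, -1] ![0, 1, 1]
  have hxx := Q3_mulVec hA.1 ![0, 1, -1] ![0, 1, -1]
  rw [← hx, hH, Q3_comm, Q3_vecH_left] at hxH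
  rw [← hx, he] at hxe
  rw [← hx] at hxx
  simp only [Q3, vecH, cons_val_zero, cons_val_one, cons_val] at hxH hxe hxx
  have hx1 : x 1 = 1 ∨ x 1 = -1 := by
    have hx2 : x 2 = -x 1 := by linarith
    have : x 1 * x 1 = 1 := by rw [hxH, hx2] at hxx; linarith
    exact Int.eq_one_or_neg_one_of_mul_eq_one this
  rcases hx1 with hx1 | hx1
  · have : A = 1 := Units.ext <| eq_of_mulVec_eq (by simpa using hH) (by simpa using he)
      (by ext i; fin_cases i <;> simp [← hx] <;> omega)
    exact this ▸ one_mem K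
  · have : A = refE1E2 := Units.ext <| eq_of_mulVec_eq (by rw [hH]; decide) (by rw [he]; decide)
      (by rw [← hx]; ext i; fin_cases i <;> simp [refE1E2_val] <;> omega)
    exact this ▸ hK

theorem oplus21_inf_vecStabilizer_vecH_le :
    oplus21 ⊓ vecStabilizer vecH ≤ Subgroup.closure {refE1E2, refE2} := by
  refine oplus21_inf_vecStabilizer_le (p := vecW) (mem_chamber_iff.2 (by decide))
    (fun q hq hqq => eq_vecW_of_mem_chamber hq (hqq.trans (by decide))) isFuture_vecW
    (parabolic_le fun i hi => ?_)
    (oplus21_inf_vecStabilizer_vecH_inf_vecW_le (Subgroup.subset_closure (by simp)))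
  fin_cases i
  · exact Subgroup.subset_closure (.inr rfl)
  · exact Subgroup.subset_closure (.inl rfl)
  · exact absurd hi (by decide)

theorem oplus21_inf_vecStabilizer_vecW_le :
    oplus21 ⊓ vecStabilizer vecW ≤ Subgroup.closure {refHE1E2, refE1E2} := by
  refine oplus21_inf_vecStabilizer_le (p := vecH) (mem_chamber_iff.2 (by decide))
    (fun q hq hqq => eq_vecH_of_mem_chamber hq (hqq.trans (by decide))) isFuture_vecH
    (parabolic_le fun i hi => ?_) ?_
  · fin_cases i
    · exact absurd hi (by decide)
    · exact Subgroup.subset_closure (.inr rfl)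
    · exact Subgroup.subset_closure (.inl rfl)
  · rw [inf_right_comm]
    exact oplus21_inf_vecStabilizer_vecH_inf_vecW_le (Subgroup.subset_closure (by simp))

theorem oplus21_inf_vecStabilizer_le_of_mem_chamber {w : ℤ³} (hw : w ∈ chamber)
    (hwf : IsFuture w) :
    oplus21 ⊓ vecStabilizer w ≤ Subgroup.closure {refE1E2, refE2} ∨
      oplus21 ⊓ vecStabilizer w ≤ Subgroup.closure {refHE1E2, refE1E2} := by
  by_cases h₂ : Q3 (simpleRoot 2) w = 0
  · -- the walls of `simpleRoot 0` and `simpleRoot 2` meet only on the light cone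
    have h₀ : Q3 (simpleRoot 0) w ≠ 0 := by
      intro h₀
      have hww := hwf.1
      rw [Q3_simpleRoot_zero, neg_eq_zero] at h₀
      rw [Q3_simpleRoot_two] at h₂
      rw [Q3, h₀, show w 0 = -w 1 by linarith] at hww
      linarith
    refine .inr fun A hA => oplus21_inf_vecStabilizer_vecW_le ⟨hA.1, ?_⟩
    refine oplus21_inf_vecStabilizer_le_vecStabilizer hw
      (fun q hq hqq => eq_vecW_of_mem_chamber hq (hqq.trans (by decide))) isFuture_vecW
      (fun i hi => ?_) hA
    fin_cases i
    · exact absurd hi h₀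
    all_goals decide
  · refine .inl fun A hA => oplus21_inf_vecStabilizer_vecH_le ⟨hA.1, ?_⟩
    refine oplus21_inf_vecStabilizer_le_vecStabilizer hw
      (fun q hq hqq => eq_vecH_of_mem_chamber hq (hqq.trans (by decide))) isFuture_vecH
      (fun i hi => ?_) hA
    fin_cases i
    · decide
    · decide
    · exact absurd hi h₂

lemma Subgroup.closure_subset_of_forall_mul_mem {G : Type*} [Group G] {s T : Set G}
    (hs : ∀ g ∈ s, g⁻¹ = g) (h1 : 1 ∈ T) (hT : ∀ g ∈ s, ∀ t ∈ T, g * t ∈ T) :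
    (Subgroup.closure s : Set G) ⊆ T := fun x hx => by
  induction hx using Subgroup.closure_induction_left with
  | one => exact h1
  | mul_left g hg y _ ih => exact hT g hg y ih
  | inv_mul_cancel g hg y _ ih => simpa [hs g hg] using hT g hg y ih

theorem finite_closure_refE1E2_refE2 : (Subgroup.closure {refE1E2, refE2} : Set M₃ˣ).Finite := by
  let T : Finset M₃ˣ := {1, refE1E2, refE2, refE1E2 * refE2, refE2 * refE1E2,
    refE1E2 * refE2 * refE1E2, refE2 * refE1E2 * refE2, refE1E2 * refE2 * refE1E2 * refE2}
  refine T.finite_toSet.subset (Subgroup.closure_subset_of_forall_mul_mem ?_ (by simp [T]) ?_)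
  · simpa using ⟨simpleRefl_inv 1, simpleRefl_inv 0⟩
  · simp only [Set.mem_insert_iff, Set.mem_singleton_iff, forall_eq_or_imp, forall_eq,
      Finset.mem_coe]
    decide

theorem finite_closure_refHE1E2_refE1E2 :
    (Subgroup.closure {refHE1E2, refE1E2} : Set M₃ˣ).Finite := by
  let T : Finset M₃ˣ := {1, refHE1E2, refE1E2, refHE1E2 * refE1E2}
  refine T.finite_toSet.subset (Subgroup.closure_subset_of_forall_mul_mem ?_ (by simp [T]) ?_)
  · simpa using ⟨simpleRefl_inv 2, simpleRefl_inv 1⟩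
  · simp only [Set.mem_insert_iff, Set.mem_singleton_iff, forall_eq_or_imp, forall_eq,
      Finset.mem_coe]
    decide

lemma closure_le_oplus21 {s : Set M₃ˣ} (hs : s ⊆ Set.range simpleRefl) :
    Subgroup.closure s ≤ oplus21 :=
  (Subgroup.closure_le _).2 fun _ hg => by
    obtain ⟨i, rfl⟩ := hs hg
    exact simpleRefl_mem_oplus21 i

lemma exists_isFuture_le_vecStabilizer {G : Subgroup M₃ˣ} (hGsub : G ≤ oplus21)
    (hGfin : (G : Set M₃ˣ).Finite) : ∃ w, IsFuture w ∧ G ≤ vecStabilizer w := by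
  have := hGfin.fintype
  refine ⟨∑ g : G, ((g : M₃ˣ) : M₃) *ᵥ vecH, ?_, fun h hh => ?_⟩
  · exact Finset.sum_induction_nonempty _ IsFuture (fun _ _ => IsFuture.add) Finset.univ_nonempty
      fun g _ => isFuture_vecH.mulVec (hGsub g.2)
  · rw [mem_vecStabilizer, mulVec_sum]
    simp_rw [mulVec_mulVec, ← Units.val_mul]
    exact Fintype.sum_equiv (Equiv.mulLeft ⟨h, hh⟩) (fun g : G => ((h * g : M₃ˣ) : M₃) *ᵥ vecH)
      (fun g : G => ((g : M₃ˣ) : M₃) *ᵥ vecH) fun g => rfl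

lemma Subgroup.eq_map_conj_of_forall_mem {M : Type*} [Group M] {Γ G K : Subgroup M} {g : M}
    (hg : g ∈ Γ) (hKΓ : K ≤ Γ) (hKfin : (K : Set M).Finite)
    (hmax : ∀ G' : Subgroup M, (G' : Set M) ⊆ Γ → (G' : Set M).Finite → G ≤ G' → G = G')
    (hGK : ∀ a ∈ G, g⁻¹ * a * g ∈ K) : G = K.map (MulAut.conj g).toMonoidHom := by
  refine hmax _ ?_ (hKfin.image _) fun a ha => ⟨_, hGK a ha, by simp [mul_assoc]⟩
  rintro _ ⟨k, hk, rfl⟩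
  exact mul_mem (mul_mem hg (hKΓ hk)) (inv_mem hg)

/-- Every maximal finite subgroup of `O⁺(2,1)(ℤ)` is conjugate in `O⁺(2,1)(ℤ)` to
`G_{H−E₁−E₂} = ⟨Ref_{E₁−E₂}, Ref_{E₂}⟩` or to `G_{E₂} = ⟨Ref_{H−E₁−E₂}, Ref_{E₁−E₂}⟩`. -/
theorem max_finite_subgroups_Oplus21 (G : Subgroup (Matrix (Fin 3) (Fin 3) ℤ)ˣ)
    (hGsub : (G : Set (Matrix (Fin 3) (Fin 3) ℤ)ˣ) ⊆ Oplus21)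
    (hGfin : (G : Set (Matrix (Fin 3) (Fin 3) ℤ)ˣ).Finite)
    (hGmax : ∀ G' : Subgroup (Matrix (Fin 3) (Fin 3) ℤ)ˣ,
      (G' : Set (Matrix (Fin 3) (Fin 3) ℤ)ˣ) ⊆ Oplus21 →
      (G' : Set (Matrix (Fin 3) (Fin 3) ℤ)ˣ).Finite → G ≤ G' → G = G') :
    ∃ g ∈ Oplus21,
      G = Subgroup.map (MulAut.conj g).toMonoidHom (Subgroup.closure {refE1E2, refE2}) ∨
      G = Subgroup.map (MulAut.conj g).toMonoidHom (Subgroup.closure {refHE1E2, refE1E2}) := by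
  obtain ⟨w, hw, hGw⟩ := exists_isFuture_le_vecStabilizer hGsub hGfin
  obtain ⟨u, hu, huw⟩ := hw.exists_mulVec_mem_chamber
  have hconj : ∀ a ∈ G, u⁻¹⁻¹ * a * u⁻¹ ∈ oplus21 ⊓ vecStabilizer ((u : M₃) *ᵥ w) :=
    fun a ha => inv_inv u ▸ Subgroup.mem_inf.2
      ⟨mul_mem (mul_mem hu (hGsub ha)) (inv_mem hu), mul_mul_inv_mem_vecStabilizer (hGw ha) u⟩
  refine ⟨u⁻¹, inv_mem hu, ?_⟩
  rcases oplus21_inf_vecStabilizer_le_of_mem_chamber huw (hw.mulVec hu) with hK | hK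
  · refine .inl (Subgroup.eq_map_conj_of_forall_mem (inv_mem hu) (closure_le_oplus21 ?_)
      finite_closure_refE1E2_refE2 hGmax fun a ha => hK (hconj a ha))
    rintro _ (rfl | rfl)
    exacts [⟨1, rfl⟩, ⟨0, rfl⟩]
  · refine .inr (Subgroup.eq_map_conj_of_forall_mem (inv_mem hu) (closure_le_oplus21 ?_)
      finite_closure_refHE1E2_refE1E2 hGmax fun a ha => hK (hconj a ha))
    rintro _ (rfl | rfl)
    exacts [⟨2, rfl⟩, ⟨1, rfl⟩]
end

section
/- There do not exist nonzero vectors u, u′ ∈ ℤ⁴ satisfying all of the following: σu = u and σu′ = u′; ρu = u; ρu′ = u′ or ρu′ = −u′; ψu ∈ {u, −u, u′, −u′}; ψu′ ∈ {u, −u, u′, −u′}; and Q(u,u) + Q(u′,u′) = 0. Here σ is the linear map swapping the coordinates v₁ and v₂ (fixing v₀ and v₃), ρ = diag(1,1,1,−1), and ψ is the reflection ψ(v) = v + (v₀+v₁+v₂+v₃)·w where w = (1,−1,−1,−1). -/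
/-- The symmetric bilinear form `Q(x,y) = x₀y₀ − x₁y₁ − x₂y₂ − x₃y₃` on `ℤ⁴`. -/
def Q4 (x y : Fin 4 → ℤ) : ℤ := x 0 * y 0 - x 1 * y 1 - x 2 * y 2 - x 3 * y 3

/-- `σ = Ref_{E₁−E₂}`: swap the coordinates `v₁` and `v₂`. -/
def sigmaMap (v : Fin 4 → ℤ) : Fin 4 → ℤ := ![v 0, v 2, v 1, v 3]

/-- `ρ = Ref_{E₃} = diag(1,1,1,−1)`. -/
def rhoMap (v : Fin 4 → ℤ) : Fin 4 → ℤ := ![v 0, v 1, v 2, -(v 3)]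

/-- `ψ = Ref_{H−E₁−E₂−E₃}`: `v ↦ v + (v₀+v₁+v₂+v₃)·w` with `w = (1,−1,−1,−1)`. -/
def psiMap (v : Fin 4 → ℤ) : Fin 4 → ℤ :=
  v + (v 0 + v 1 + v 2 + v 3) • (![1, -1, -1, -1] : Fin 4 → ℤ)

set_option maxHeartbeats 2000000
set_option linter.unnecessarySeqFocus false

/-- There are no nonzero `u, u' ∈ ℤ⁴` fixed by `σ`, with `ρu = u`, `ρu' = ±u'`, with `ψ`
permuting `{±u, ±u'}`, and with `Q(u,u) + Q(u',u') = 0`. -/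
theorem no_pair_of_fixed_classes :
    ¬ ∃ u u' : Fin 4 → ℤ, u ≠ 0 ∧ u' ≠ 0 ∧
      sigmaMap u = u ∧ sigmaMap u' = u' ∧
      rhoMap u = u ∧ (rhoMap u' = u' ∨ rhoMap u' = -u') ∧
      psiMap u ∈ ({u, -u, u', -u'} : Set (Fin 4 → ℤ)) ∧
      psiMap u' ∈ ({u, -u, u', -u'} : Set (Fin 4 → ℤ)) ∧
      Q4 u u + Q4 u' u' = 0 := by
  rintro ⟨u, u', hu, hu', hσ, hσ', hρ, hρ', hψ, hψ', hQ⟩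
  simp only [Set.mem_insert_iff, Set.mem_singleton_iff] at hψ hψ'
  have e2 : u 2 = u 1 := by simpa [sigmaMap] using congrFun hσ 1
  have e3 : u 3 = 0 := by have := congrFun hρ 3; simp [rhoMap] at this; omega
  have e2' : u' 2 = u' 1 := by simpa [sigmaMap] using congrFun hσ' 1
  simp only [Q4] at hQ
  rw [e2, e3, e2'] at hQ
  rcases hρ' with hρ' | hρ'
  · -- case A : ρ u' = u'
    have e3' : u' 3 = 0 := by have := congrFun hρ' 3; simp [rhoMap] at this; omega
    rw [e3'] at hQ
    have hs : u 0 = -2 * u 1 := by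
      rcases hψ with h|h|h|h <;>
        (have h3 := congrFun h 3; simp [psiMap] at h3; omega)
    have ht : u' 0 = -2 * u' 1 := by
      rcases hψ' with h|h|h|h <;>
        (have h3 := congrFun h 3; simp [psiMap] at h3; omega)
    rw [hs, ht] at hQ
    have hb : u 1 = 0 := mul_self_eq_zero.mp (by nlinarith [mul_self_nonneg (u' 1)])
    have hd : u' 1 = 0 := mul_self_eq_zero.mp (by nlinarith [mul_self_nonneg (u 1)])
    exact hu (by funext i; fin_cases i <;> simp_all)
  · -- case B : ρ u' = -u'
    have e0' : u' 0 = 0 := by have := congrFun hρ' 0; simp [rhoMap] at this; omega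
    have e1' : u' 1 = 0 := by have := congrFun hρ' 1; simp [rhoMap] at this; omega
    rw [e1', e0'] at hQ
    have he : u' 3 ≠ 0 := by
      intro h; exact hu' (by funext i; fin_cases i <;> simp_all)
    have hee := mul_self_pos.mpr he
    rcases hψ' with h'|h'|h'|h' <;>
    rcases hψ with h|h|h|h <;>
    · have h0' := congrFun h' 0; have h1' := congrFun h' 1; have h3' := congrFun h' 3
      have h0 := congrFun h 0; have h1 := congrFun h 1; have h3 := congrFun h 3
      simp [psiMap] at h0' h1' h3' h0 h1 h3
      first
      | omega
      | (have ha : u 0 * u 0 = u' 3 * u' 3 := by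
           rcases (show u 0 = u' 3 ∨ u 0 = -u' 3 by omega) with hh|hh <;> rw [hh] <;> ring
         have hb : u 1 * u 1 = u' 3 * u' 3 := by
           rcases (show u 1 = u' 3 ∨ u 1 = -u' 3 by omega) with hh|hh <;> rw [hh] <;> ring
         nlinarith [hQ, ha, hb, hee])
end

section
/- In GL(4,ℤ), let σ₁₂ be the permutation matrix swapping coordinates 1 and 2 (fixing coordinates 0 and 3), σ₂₃ the permutation matrix swapping coordinates 2 and 3, ψ the matrix of the linear map v ↦ v + (v₀+v₁+v₂+v₃)·w with w = (1,−1,−1,−1), and −I₄ the negative of the identity. Then ψ has order 2 and commutes with σ₁₂ and σ₂₃; the subgroup ⟨σ₁₂, σ₂₃⟩ is isomorphic to the symmetric group S₃; and the subgroup of GL(4,ℤ) generated by {ψ, σ₁₂, σ₂₃, −I₄} is isomorphic to ℤ/2ℤ × S₃ × ℤ/2ℤ (of order 24), with the three factors generated by ψ, by {σ₁₂, σ₂₃}, and by −I₄ respectively. -/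
open Matrix

/-- The permutation matrix swapping coordinates 1 and 2, as an element of `GL(4,ℤ)`. -/
def s12U : (Matrix (Fin 4) (Fin 4) ℤ)ˣ :=
  ⟨Matrix.of ![![1, 0, 0, 0], ![0, 0, 1, 0], ![0, 1, 0, 0], ![0, 0, 0, 1]],
   Matrix.of ![![1, 0, 0, 0], ![0, 0, 1, 0], ![0, 1, 0, 0], ![0, 0, 0, 1]],
   by decide, by decide⟩

/-- The permutation matrix swapping coordinates 2 and 3, as an element of `GL(4,ℤ)`. -/
def s23U : (Matrix (Fin 4) (Fin 4) ℤ)ˣ :=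
  ⟨Matrix.of ![![1, 0, 0, 0], ![0, 1, 0, 0], ![0, 0, 0, 1], ![0, 0, 1, 0]],
   Matrix.of ![![1, 0, 0, 0], ![0, 1, 0, 0], ![0, 0, 0, 1], ![0, 0, 1, 0]],
   by decide, by decide⟩

/-- The matrix of `v ↦ v + (v₀+v₁+v₂+v₃)·w`, `w = (1,−1,−1,−1)`. -/
def psiMat : Matrix (Fin 4) (Fin 4) ℤ :=
  Matrix.of fun i j => (if i = j then 1 else 0) + (![1, -1, -1, -1] : Fin 4 → ℤ) i

/-- `ψ` as an element of `GL(4,ℤ)`. -/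
def psiU : (Matrix (Fin 4) (Fin 4) ℤ)ˣ := ⟨psiMat, psiMat, by decide, by decide⟩

open Equiv in
lemma perm3_list (π : Perm (Fin 3)) :
    π = 1 ∨ π = swap 0 1 ∨ π = swap 0 2 ∨ π = swap 1 2 ∨
    π = swap 0 1 * swap 1 2 ∨ π = swap 1 2 * swap 0 1 := by
  have h3 : ∀ x : Fin 3, x = 0 ∨ x = 1 ∨ x = 2 := by decide
  have hinj := π.injective
  have e : ∀ σ : Perm (Fin 3), π 0 = σ 0 → π 1 = σ 1 → π 2 = σ 2 → π = σ := by
    intro σ h0 h1 h2; refine Equiv.ext fun i => ?_; rcases h3 i with rfl|rfl|rfl <;> assumption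
  rcases h3 (π 0) with h0|h0|h0 <;> rcases h3 (π 1) with h1|h1|h1 <;>
      rcases h3 (π 2) with h2|h2|h2 <;>
    first
    | exact absurd (hinj (h0.trans h1.symm)) (by decide)
    | exact absurd (hinj (h0.trans h2.symm)) (by decide)
    | exact absurd (hinj (h1.trans h2.symm)) (by decide)
    | exact Or.inl (e 1 (h0.trans (by decide)) (h1.trans (by decide)) (h2.trans (by decide)))
    | exact Or.inr (Or.inl (e _ (h0.trans (by decide)) (h1.trans (by decide)) (h2.trans (by decide))))
    | exact Or.inr (Or.inr (Or.inl (e _ (h0.trans (by decide)) (h1.trans (by decide)) (h2.trans (by decide)))))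
    | exact Or.inr (Or.inr (Or.inr (Or.inl (e _ (h0.trans (by decide)) (h1.trans (by decide)) (h2.trans (by decide))))))
    | exact Or.inr (Or.inr (Or.inr (Or.inr (Or.inl (e _ (h0.trans (by decide)) (h1.trans (by decide)) (h2.trans (by decide)))))))
    | exact Or.inr (Or.inr (Or.inr (Or.inr (Or.inr (e _ (h0.trans (by decide)) (h1.trans (by decide)) (h2.trans (by decide)))))))

/-- The 4×4 permutation matrix of a permutation of `{1,2,3}` (fixing coordinate 0). -/
def Mp (π : Equiv.Perm (Fin 3)) : Matrix (Fin 4) (Fin 4) ℤ :=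
  Matrix.of fun i j =>
    if (Fin.cons (0 : Fin 4) (fun k => (π k).succ) : Fin 4 → Fin 4) j = i then 1 else 0

lemma Mp_mul (a b : Equiv.Perm (Fin 3)) : Mp (a * b) = Mp a * Mp b := by
  rcases perm3_list a with rfl|rfl|rfl|rfl|rfl|rfl <;>
    rcases perm3_list b with rfl|rfl|rfl|rfl|rfl|rfl <;> decide

lemma Mp_inv (a : Equiv.Perm (Fin 3)) : Mp a * Mp a⁻¹ = 1 ∧ Mp a⁻¹ * Mp a = 1 := by
  rcases perm3_list a with rfl|rfl|rfl|rfl|rfl|rfl <;> exact ⟨by decide, by decide⟩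

/-- Permutation matrices on coordinates 1,2,3 as units. -/
def f2fun (π : Equiv.Perm (Fin 3)) : (Matrix (Fin 4) (Fin 4) ℤ)ˣ :=
  ⟨Mp π, Mp π⁻¹, (Mp_inv π).1, (Mp_inv π).2⟩

def permHom : Equiv.Perm (Fin 3) →* (Matrix (Fin 4) (Fin 4) ℤ)ˣ :=
  MonoidHom.mk' f2fun fun a b => Units.ext (Mp_mul a b)

lemma permHom_inj : Function.Injective permHom := by
  intro a b h
  rcases perm3_list a with rfl|rfl|rfl|rfl|rfl|rfl <;>
      rcases perm3_list b with rfl|rfl|rfl|rfl|rfl|rfl <;>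
    first
    | rfl
    | exact absurd (congrArg Units.val h) (by decide)

open Equiv in
lemma perm3_top :
    Subgroup.closure ({swap 0 1, swap 1 2} : Set (Perm (Fin 3))) = ⊤ := by
  refine eq_top_iff.mpr fun π _ => ?_
  have h01 : swap (0:Fin 3) 1 ∈ Subgroup.closure ({swap 0 1, swap 1 2} : Set (Perm (Fin 3))) :=
    Subgroup.subset_closure (Set.mem_insert _ _)
  have h12 : swap (1:Fin 3) 2 ∈ Subgroup.closure ({swap 0 1, swap 1 2} : Set (Perm (Fin 3))) :=
    Subgroup.subset_closure (Set.mem_insert_of_mem _ rfl)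
  rcases perm3_list π with rfl|rfl|rfl|rfl|rfl|rfl
  · exact one_mem _
  · exact h01
  · rw [show swap (0:Fin 3) 2 = swap 0 1 * swap 1 2 * swap 0 1 from by decide]
    exact mul_mem (mul_mem h01 h12) h01
  · exact h12
  · exact mul_mem h01 h12
  · exact mul_mem h12 h01

lemma permHom_range : permHom.range = Subgroup.closure {s12U, s23U} := by
  rw [MonoidHom.range_eq_map, ← perm3_top, MonoidHom.map_closure, Set.image_pair,
    show permHom (Equiv.swap 0 1) = s12U from Units.ext (by decide),
    show permHom (Equiv.swap 1 2) = s23U from Units.ext (by decide)]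

/-! The big homomorphism. -/

lemma z2_list (a : Multiplicative (ZMod 2)) : a = 1 ∨ a = Multiplicative.ofAdd 1 := by
  revert a; decide

def f1fun (a : Multiplicative (ZMod 2)) : (Matrix (Fin 4) (Fin 4) ℤ)ˣ :=
  if a = 1 then 1 else psiU

def f3fun (b : Multiplicative (ZMod 2)) : (Matrix (Fin 4) (Fin 4) ℤ)ˣ :=
  if b = 1 then 1 else -1

def Ffun (x : Multiplicative (ZMod 2) × Equiv.Perm (Fin 3) × Multiplicative (ZMod 2)) :
    (Matrix (Fin 4) (Fin 4) ℤ)ˣ :=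
  f1fun x.1 * f2fun x.2.1 * f3fun x.2.2

lemma f1_mul (a a' : Multiplicative (ZMod 2)) : f1fun (a * a') = f1fun a * f1fun a' := by
  rcases z2_list a with rfl|rfl <;> rcases z2_list a' with rfl|rfl <;>
    exact Units.ext (by decide)

lemma f3_mul (b b' : Multiplicative (ZMod 2)) : f3fun (b * b') = f3fun b * f3fun b' := by
  rcases z2_list b with rfl|rfl <;> rcases z2_list b' with rfl|rfl <;>
    exact Units.ext (by decide)

lemma hc12 (a : Multiplicative (ZMod 2)) (π : Equiv.Perm (Fin 3)) :
    Commute (f1fun a) (f2fun π) := by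
  rcases z2_list a with rfl|rfl <;> rcases perm3_list π with rfl|rfl|rfl|rfl|rfl|rfl <;>
    exact Units.ext (by decide)

lemma hcentral (b : Multiplicative (ZMod 2)) (x : (Matrix (Fin 4) (Fin 4) ℤ)ˣ) :
    Commute (f3fun b) x := by
  rcases z2_list b with rfl|rfl
  · rw [show f3fun 1 = 1 from if_pos rfl]; exact Commute.one_left x
  · rw [show f3fun (Multiplicative.ofAdd 1) = -1 from if_neg (by decide)]
    exact (Commute.one_left x).neg_left

lemma Ffun_mul (x y : Multiplicative (ZMod 2) × Equiv.Perm (Fin 3) × Multiplicative (ZMod 2)) :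
    Ffun (x * y) = Ffun x * Ffun y := by
  obtain ⟨a, π, b⟩ := x
  obtain ⟨a', π', b'⟩ := y
  show f1fun (a * a') * f2fun (π * π') * f3fun (b * b') =
    f1fun a * f2fun π * f3fun b * (f1fun a' * f2fun π' * f3fun b')
  rw [f1_mul, f3_mul, show f2fun (π * π') = f2fun π * f2fun π' from Units.ext (Mp_mul π π'),
    (hcentral b (f1fun a' * f2fun π')).mul_mul_mul_comm (f1fun a * f2fun π) (f3fun b'),
    ((hc12 a' π).symm).mul_mul_mul_comm (f1fun a) (f2fun π')]

def bigHom : Multiplicative (ZMod 2) × Equiv.Perm (Fin 3) × Multiplicative (ZMod 2) →*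
    (Matrix (Fin 4) (Fin 4) ℤ)ˣ :=
  MonoidHom.mk' Ffun Ffun_mul

lemma bigHom_inj : Function.Injective bigHom := by
  rw [injective_iff_map_eq_one]
  rintro ⟨a, π, b⟩ h
  rcases z2_list a with rfl|rfl <;> rcases perm3_list π with rfl|rfl|rfl|rfl|rfl|rfl <;>
      rcases z2_list b with rfl|rfl <;>
    first
    | rfl
    | exact absurd (congrArg Units.val h) (by decide)

lemma bigHom_range : bigHom.range = Subgroup.closure {psiU, s12U, s23U, -1} := by
  apply le_antisymm
  · rintro x ⟨⟨a, π, b⟩, rfl⟩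
    show f1fun a * f2fun π * f3fun b ∈ _
    refine mul_mem (mul_mem ?_ ?_) ?_
    · rcases z2_list a with rfl|rfl
      · rw [show f1fun 1 = 1 from if_pos rfl]; exact one_mem _
      · rw [show f1fun (Multiplicative.ofAdd 1) = psiU from if_neg (by decide)]
        exact Subgroup.subset_closure (by simp)
    · have h1 : f2fun π ∈ permHom.range := ⟨π, rfl⟩
      rw [permHom_range] at h1
      exact Subgroup.closure_mono (by intro z hz; simp at hz ⊢; tauto) h1
    · rcases z2_list b with rfl|rfl
      · rw [show f3fun 1 = 1 from if_pos rfl]; exact one_mem _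
      · rw [show f3fun (Multiplicative.ofAdd 1) = -1 from if_neg (by decide)]
        exact Subgroup.subset_closure (by simp)
  · rw [Subgroup.closure_le]
    rintro x (rfl | rfl | rfl | rfl)
    · exact ⟨(Multiplicative.ofAdd 1, 1, 1), Units.ext (by decide)⟩
    · exact ⟨(1, Equiv.swap 0 1, 1), Units.ext (by decide)⟩
    · exact ⟨(1, Equiv.swap 1 2, 1), Units.ext (by decide)⟩
    · exact ⟨(1, 1, Multiplicative.ofAdd 1), Units.ext (by decide)⟩

/-- `ψ` has order 2 and commutes with `σ₁₂` and `σ₂₃`; `⟨σ₁₂, σ₂₃⟩ ≅ S₃`; and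
`⟨ψ, σ₁₂, σ₂₃, −I₄⟩ ≅ ℤ/2ℤ × S₃ × ℤ/2ℤ` (of order 24), the three factors being generated by
`ψ`, by `{σ₁₂, σ₂₃}`, and by `−I₄` respectively. -/
theorem subgroup_psi_s12_s23_negI_isom_Z2_S3_Z2 :
    orderOf psiU = 2 ∧ Commute psiU s12U ∧ Commute psiU s23U ∧
    Nonempty ((Subgroup.closure {s12U, s23U} : Subgroup (Matrix (Fin 4) (Fin 4) ℤ)ˣ) ≃*
      Equiv.Perm (Fin 3)) ∧
    Nat.card
      (Subgroup.closure {psiU, s12U, s23U, -1} : Subgroup (Matrix (Fin 4) (Fin 4) ℤ)ˣ) = 24 ∧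
    ∃ φ : (Subgroup.closure {psiU, s12U, s23U, -1} : Subgroup (Matrix (Fin 4) (Fin 4) ℤ)ˣ) ≃*
        Multiplicative (ZMod 2) × Equiv.Perm (Fin 3) × Multiplicative (ZMod 2),
      φ ⟨psiU, Subgroup.subset_closure (by simp)⟩ = (Multiplicative.ofAdd 1, 1, 1) ∧
      φ ⟨s12U, Subgroup.subset_closure (by simp)⟩ = (1, Equiv.swap 0 1, 1) ∧
      φ ⟨s23U, Subgroup.subset_closure (by simp)⟩ = (1, Equiv.swap 1 2, 1) ∧
      φ ⟨-1, Subgroup.subset_closure (by simp)⟩ = (1, 1, Multiplicative.ofAdd 1) := by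
  refine ⟨?_, ?_, ?_, ?_, ?_, ?_⟩
  · exact orderOf_eq_prime (Units.ext (by decide)) (fun h => by
      exact absurd (congrArg Units.val h) (by decide))
  · exact Units.ext (by decide)
  · exact Units.ext (by decide)
  · exact ⟨(MulEquiv.subgroupCongr permHom_range.symm).trans
      (MonoidHom.ofInjective permHom_inj).symm⟩
  · rw [← bigHom_range, Nat.card_congr (MonoidHom.ofInjective bigHom_inj).toEquiv.symm,
      Nat.card_eq_fintype_card]
    decide
  · refine ⟨(MulEquiv.subgroupCongr bigHom_range.symm).trans
      (MonoidHom.ofInjective bigHom_inj).symm, ?_, ?_, ?_, ?_⟩ <;>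
    · rw [MulEquiv.trans_apply, MulEquiv.symm_apply_eq]
      exact Subtype.ext ((MonoidHom.ofInjective_apply bigHom_inj).trans
        (Units.ext (by decide)).symm).symm
end
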